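/- arXiv:2101.05853 — 3 statements merged into one kernel-verified Lean document; each statement's English description precedes it below -/
import Mathlib

section
/- Let (y_i), (p_i), (q_i) for i = 1..n be real sequences such that y_i is strictly increasing, all q_i > 0, the sums of p_i and of q_i both equal 1, and the ratio p_i/q_i is (weakly) decreasing in i, with p_i ≠ q_i for at least one i. Then ∑ p_i y_i < ∑ q_i y_i. -/
theorem stmt_0 (n : ℕ) (y p q : Fin n → ℝ)
    (hy : StrictMono y)
    (hq : ∀ i, 0 < q i)
    (hp1 : ∑ i, p i = 1) (hq1 : ∑ i, q i = 1)
    (hratio : ∀ i j : Fin n, i ≤ j → p j / q j ≤ p i / q i)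
    (hne : ∃ i, p i ≠ q i) :
    ∑ i, p i * y i < ∑ i, q i * y i := by
  classical
  set d : Fin n → ℝ := fun i => p i - q i with hd
  have hdsum : ∑ i, d i = 0 := by
    simp [hd, Finset.sum_sub_distrib, hp1, hq1]
  have key : ∀ i j, 0 < d i → d j < 0 → i < j := by
    intro i j hi hj
    by_contra h
    push_neg at h
    have h1 : (1:ℝ) < p i / q i := (one_lt_div (hq i)).2 (by simp only [hd] at hi; linarith)
    have h2 : p j / q j < 1 := (div_lt_one (hq j)).2 (by simp only [hd] at hj; linarith)
    have := hratio j i h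
    linarith
  obtain ⟨k, hk⟩ := hne
  have hkd : d k ≠ 0 := sub_ne_zero.2 hk
  have hpos : ∃ i, 0 < d i := by
    by_contra h
    push_neg at h
    have hk' : d k < 0 := lt_of_le_of_ne (h k) hkd
    have : ∑ i, d i < 0 := by
      have := Finset.sum_lt_sum (g := fun _ => (0:ℝ)) (fun i _ => h i)
        ⟨k, Finset.mem_univ k, hk'⟩
      simpa using this
    linarith
  have hneg : ∃ j, d j < 0 := by
    by_contra h
    push_neg at h
    obtain ⟨i, hi⟩ := hpos
    have : (0:ℝ) < ∑ i, d i := by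
      have := Finset.sum_lt_sum (f := fun _ => (0:ℝ)) (fun i _ => h i)
        ⟨i, Finset.mem_univ i, hi⟩
      simpa using this
    linarith
  set Spos := Finset.univ.filter (fun i => 0 < d i) with hSp
  set Sneg := Finset.univ.filter (fun i => d i < 0) with hSn
  have hSpos : Spos.Nonempty := ⟨hpos.choose, by simp [hSp, hpos.choose_spec]⟩
  have hSneg : Sneg.Nonempty := ⟨hneg.choose, by simp [hSn, hneg.choose_spec]⟩
  set i0 := Spos.max' hSpos with hi0def
  set j0 := Sneg.min' hSneg with hj0def
  have hi0 : 0 < d i0 := (Finset.mem_filter.1 (Spos.max'_mem hSpos)).2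
  have hj0 : d j0 < 0 := (Finset.mem_filter.1 (Sneg.min'_mem hSneg)).2
  have hij : i0 < j0 := key _ _ hi0 hj0
  set c := y i0 with hc
  have hterm : ∀ i, d i * (y i - c) ≤ 0 := by
    intro i
    rcases lt_trichotomy (d i) 0 with h | h | h
    · have h1 : j0 ≤ i := Sneg.min'_le i (by simp [hSn, h])
      have h2 : c < y i := hy (lt_of_lt_of_le hij h1)
      nlinarith
    · simp [h]
    · have h1 : i ≤ i0 := Spos.le_max' i (by simp [hSp, h])
      have h2 : y i ≤ c := hy.monotone h1
      nlinarith
  have hstrict : d j0 * (y j0 - c) < 0 := by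
    have : c < y j0 := hy hij
    nlinarith
  have hsum : ∑ i, d i * (y i - c) < 0 := by
    have := Finset.sum_lt_sum (g := fun _ => (0:ℝ)) (fun i _ => hterm i)
      ⟨j0, Finset.mem_univ j0, hstrict⟩
    simpa using this
  have expand : ∑ i, d i * (y i - c)
      = (∑ i, p i * y i - ∑ i, q i * y i) - (∑ i, d i) * c := by
    rw [← Finset.sum_sub_distrib, Finset.sum_mul, ← Finset.sum_sub_distrib]
    apply Finset.sum_congr rfl
    intro i _
    simp [hd]; ring
  rw [expand, hdsum] at hsum
  linarith
end

section
/- Consider the Plackett–Luce ranking model with parameter θ on values x_1, ..., x_n, generated by sequentially choosing the next-ranked remaining candidate i with probability exp(θ x_i)/∑_{j ∈ S} exp(θ x_j) where S is the set of remaining candidates. If π and σ are two i.i.d. Plackett–Luce rankings, then E[(π_1 − π_2)·1{π_1 ≠ σ_1}] = 0. -/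
/-!
With weights `w i = exp (θ x_i)` and `S = ∑ w`, the inner expectation over `σ` is
`P(σ₁ ≠ π₁) = 1 - w_{π₁} / S`. The Plackett–Luce probability of `π` is
`(w_{π₁} / S) · (w_{π₂} / (S - w_{π₁})) · R`, with `R` depending only on `π₃, π₄, …`, so
`P(π) · (1 - w_{π₁} / S) = w_{π₁} w_{π₂} R / S²` is invariant under exchanging the first two
positions of `π`, while `x_{π₁} - x_{π₂}` changes sign. The involution `π ↦ π ∘ (0 1)` therefore
cancels the sum in pairs.
-/

open Finset

/-- Probability of the ranking `π` (mapping positions to items) under the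
Plackett–Luce model with parameter `θ` on values `x`: the candidate placed at
each position `k` is chosen among the remaining candidates (those placed at
position `k` or later) with probability proportional to `exp (θ * x ·)`. -/
noncomputable def plProb {n : ℕ} (θ : ℝ) (x : Fin n → ℝ)
    (π : Equiv.Perm (Fin n)) : ℝ :=
  ∏ k : Fin n,
    Real.exp (θ * x (π k)) /
      ∑ j ∈ Finset.univ.filter (fun j : Fin n => k ≤ π.symm j),
        Real.exp (θ * x j)

section SequentialChoice

variable {n : ℕ}

noncomputable def seqChoiceProb (v : Fin n → ℝ) : ℝ :=
  ∏ k, v k / ∑ m ∈ Ici k, v m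

lemma seqChoiceProb_succ (u : Fin (n + 1) → ℝ) :
    seqChoiceProb u = (u 0 / ∑ m, u m) * seqChoiceProb (u ∘ Fin.succ) := by
  rw [seqChoiceProb, Fin.prod_univ_succ, seqChoiceProb, ← bot_eq_zero, Ici_bot]
  congr 2 with i
  rw [← Fin.map_succEmb_Ici, sum_map]
  rfl

lemma seqChoiceProb_comp_decomposeFin_symm (v : Fin (n + 1) → ℝ) (a : Fin (n + 1))
    (e : Equiv.Perm (Fin n)) :
    seqChoiceProb (v ∘ Equiv.Perm.decomposeFin.symm (a, e)) =
      (v a / ∑ m, v m) * seqChoiceProb ((fun i => v (Equiv.swap 0 a i.succ)) ∘ e) := by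
  rw [seqChoiceProb_succ]
  congr 2
  · simp
  · exact Equiv.sum_comp _ v
  · ext i
    simp [Equiv.Perm.decomposeFin_symm_apply_succ]

lemma sum_seqChoiceProb_comp_perm (v : Fin n → ℝ) (hv : ∀ i, 0 < v i) :
    ∑ π : Equiv.Perm (Fin n), seqChoiceProb (v ∘ π) = 1 := by
  induction n with
  | zero => simp [seqChoiceProb]
  | succ n ih =>
    have hS : ∑ m, v m ≠ 0 := (sum_pos (fun i _ => hv i) univ_nonempty).ne'
    rw [← Equiv.sum_comp Equiv.Perm.decomposeFin.symm, Fintype.sum_prod_type]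
    simp only [seqChoiceProb_comp_decomposeFin_symm, ← mul_sum, ih _ fun i => hv _, mul_one,
      ← sum_div, div_self hS]

lemma sum_seqChoiceProb_comp_perm_of_apply_zero_eq (v : Fin (n + 1) → ℝ) (hv : ∀ i, 0 < v i)
    (a : Fin (n + 1)) :
    ∑ π : Equiv.Perm (Fin (n + 1)) with π 0 = a, seqChoiceProb (v ∘ π) = v a / ∑ m, v m := by
  rw [sum_filter, ← Equiv.sum_comp Equiv.Perm.decomposeFin.symm, Fintype.sum_prod_type]
  simp only [Equiv.Perm.decomposeFin_symm_apply_zero, sum_ite_irrel, sum_const_zero, sum_ite_eq',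
    mem_univ, if_true, seqChoiceProb_comp_decomposeFin_symm, ← mul_sum,
    sum_seqChoiceProb_comp_perm _ fun i => hv _, mul_one]

lemma sum_seqChoiceProb_mul_ite_ne_apply_zero (v : Fin (n + 1) → ℝ) (hv : ∀ i, 0 < v i)
    (a : Fin (n + 1)) :
    ∑ σ : Equiv.Perm (Fin (n + 1)), seqChoiceProb (v ∘ σ) * (if a ≠ σ 0 then 1 else 0) =
      1 - v a / ∑ m, v m := by
  simp only [mul_ite, mul_one, mul_zero, ← sum_filter, ne_comm (a := a), ne_eq]
  rw [eq_sub_iff_add_eq, ← sum_seqChoiceProb_comp_perm_of_apply_zero_eq v hv a,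
    sum_filter_not_add_sum_filter, sum_seqChoiceProb_comp_perm v hv]

lemma seqChoiceProb_mul_one_sub (u : Fin (n + 2) → ℝ) (hu : ∀ i, 0 < u i) :
    seqChoiceProb u * (1 - u 0 / ∑ m, u m) =
      u 0 * u 1 / (∑ m, u m) ^ 2 * seqChoiceProb (fun i => u i.succ.succ) := by
  have hS : 0 < ∑ m, u m := sum_pos (fun i _ => hu i) univ_nonempty
  have hT : 0 < ∑ m, u m - u 0 := by
    rw [Fin.sum_univ_succ u, add_sub_cancel_left]
    exact sum_pos (fun i _ => hu _) univ_nonempty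
  have hsucc : ∑ m, (u ∘ Fin.succ) m = ∑ m, u m - u 0 := by
    rw [Fin.sum_univ_succ u, add_sub_cancel_left]; rfl
  rw [seqChoiceProb_succ, seqChoiceProb_succ (u ∘ Fin.succ), hsucc]
  simp only [Function.comp_apply, Fin.succ_zero_eq_one]
  field_simp
  rfl

lemma seqChoiceProb_comp_swap_mul_one_sub (u : Fin (n + 2) → ℝ) (hu : ∀ i, 0 < u i) :
    seqChoiceProb (u ∘ Equiv.swap 0 1) * (1 - u 1 / ∑ m, u m) =
      seqChoiceProb u * (1 - u 0 / ∑ m, u m) := by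
  have h := seqChoiceProb_mul_one_sub (u ∘ Equiv.swap 0 1) fun i => hu _
  simp only [Equiv.sum_comp, Function.comp_apply, Equiv.swap_apply_left, Equiv.swap_apply_right,
    Equiv.swap_apply_of_ne_of_ne (Fin.succ_ne_zero _) (Fin.succ_succ_ne_one _)] at h
  rw [h, seqChoiceProb_mul_one_sub u hu, mul_comm (u 1)]

end SequentialChoice

lemma plProb_eq_seqChoiceProb {n : ℕ} (θ : ℝ) (x : Fin n → ℝ) (π : Equiv.Perm (Fin n)) :
    plProb θ x π = seqChoiceProb ((fun j => Real.exp (θ * x j)) ∘ π) :=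
  prod_congr rfl fun _ _ => congrArg _ (sum_equiv π (by simp) fun _ _ => rfl).symm

theorem stmt_14 (n : ℕ) (hn : 2 ≤ n) (θ : ℝ) (x : Fin n → ℝ) :
    ∑ π : Equiv.Perm (Fin n), ∑ σ : Equiv.Perm (Fin n),
      plProb θ x π * plProb θ x σ *
        ((x (π ⟨0, by omega⟩) - x (π ⟨1, by omega⟩)) *
          (if π ⟨0, by omega⟩ ≠ σ ⟨0, by omega⟩ then (1 : ℝ) else 0)) = 0 := by
  obtain ⟨m, rfl⟩ : ∃ m, n = m + 2 := ⟨n - 2, by omega⟩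
  simp only [plProb_eq_seqChoiceProb]
  set w : Fin (m + 2) → ℝ := fun j => Real.exp (θ * x j)
  have hw : ∀ i, 0 < w i := fun i => Real.exp_pos _
  have hinner (π : Equiv.Perm (Fin (m + 2))) :
      ∑ σ : Equiv.Perm (Fin (m + 2)), seqChoiceProb (w ∘ π) * seqChoiceProb (w ∘ σ) *
          ((x (π 0) - x (π 1)) * if π 0 ≠ σ 0 then (1 : ℝ) else 0) =
        (x (π 0) - x (π 1)) * (seqChoiceProb (w ∘ π) * (1 - w (π 0) / ∑ j, w j)) := by
    rw [← sum_seqChoiceProb_mul_ite_ne_apply_zero w hw, mul_sum, mul_sum]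
    exact sum_congr rfl fun σ _ => by ring
  refine (sum_congr rfl fun π _ => hinner π).trans ?_
  refine sum_ninvolution (· * Equiv.swap (0 : Fin (m + 2)) 1) (fun π => ?_) (fun π _ h => ?_)
    (fun _ => mem_univ _) (fun π => Equiv.mul_swap_mul_self _ _ _)
  · have hswap := seqChoiceProb_comp_swap_mul_one_sub (w ∘ π) fun i => hw _
    simp only [Equiv.sum_comp, Function.comp_apply] at hswap
    simp only [Equiv.Perm.coe_mul, ← Function.comp_assoc, hswap, Function.comp_apply,
      Equiv.swap_apply_left, Equiv.swap_apply_right]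
    ring
  · simpa using congrArg (· 0) h
end

section
/- Let X_i and X_j be independent with X_i = x_i + σ·ε_i, X_j = x_j + σ·ε_j, x_i > x_j, where ε_i, ε_j are i.i.d. standard Laplace random variables. If a ≤ x_j, then Pr[X_i > X_j | X_i < a, X_j < a] = 1/2. -/
/-!
Below a threshold `a` that lies below both centres, the Laplace density centred at `x₀` is
`exp ((a - x₀) / σ)` times the density centred at `a`. Hence, conditioned on both variables being
below `a`, they are independent with the same atomless law, and by exchangeability
`P(X > Y) = P(Y > X)` while `P(X = Y) = 0`.
-/

open MeasureTheory ENNReal Set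

/-- Density of `x₀ + σ·ε` where `ε` is standard Laplace. -/
noncomputable def laplaceShiftDensity (x₀ σ : ℝ) (t : ℝ) : ℝ≥0∞ :=
  ENNReal.ofReal ((1 / (2 * σ)) * Real.exp (-|t - x₀| / σ))

section Exchangeable

variable {α : Type*} [LinearOrder α] [TopologicalSpace α] [OrderClosedTopology α]
  [SecondCountableTopology α] [MeasurableSpace α] [OpensMeasurableSpace α]

lemma prod_self_diagonal_eq_zero (ν : Measure α) [SFinite ν] [NullSingletonClass ν] :
    ν.prod ν {p | p.1 = p.2} = 0 := by
  rw [Measure.prod_apply (isClosed_eq continuous_fst continuous_snd).measurableSet]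
  have hslice (x : α) : Prod.mk x ⁻¹' {p : α × α | p.1 = p.2} = {x} := by
    ext y; simp [eq_comm]
  simp [hslice]

lemma prod_self_snd_lt_fst_eq (ν : Measure α) [SFinite ν] :
    ν.prod ν {p | p.2 < p.1} = ν.prod ν {p | p.1 < p.2} :=
  Measure.measurePreserving_swap.measure_preimage
    (measurableSet_lt measurable_fst measurable_snd).nullMeasurableSet

lemma two_mul_prod_self_snd_lt_fst (ν : Measure α) [SFinite ν] [NullSingletonClass ν] :
    2 * ν.prod ν {p | p.2 < p.1} = ν.prod ν univ := by
  have hlt : MeasurableSet {p : α × α | p.1 < p.2} :=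
    measurableSet_lt measurable_fst measurable_snd
  have hsplit : univ \ {p : α × α | p.1 = p.2} = {p | p.2 < p.1} ∪ {p | p.1 < p.2} := by
    ext p; simp [lt_or_lt_iff_ne, ne_comm]
  have hdisj : Disjoint {p : α × α | p.2 < p.1} {p | p.1 < p.2} :=
    disjoint_left.2 fun p h₁ h₂ => lt_asymm h₁ h₂
  rw [← measure_sdiff_null (s := univ) (prod_self_diagonal_eq_zero ν), hsplit,
    measure_union hdisj hlt, ← prod_self_snd_lt_fst_eq, two_mul]

lemma prod_self_snd_lt_fst_div_univ (ν : Measure α) [IsFiniteMeasure ν] [NeZero ν]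
    [NullSingletonClass ν] :
    ν.prod ν {p | p.2 < p.1} / ν.prod ν univ = 1 / 2 := by
  have huniv : ν.prod ν univ ≠ 0 := by
    rw [← univ_prod_univ, Measure.prod_prod]
    exact mul_ne_zero (NeZero.ne _) (NeZero.ne _)
  have hpos : ν.prod ν {p | p.2 < p.1} ≠ 0 := fun h =>
    huniv (by rw [← two_mul_prod_self_snd_lt_fst, h, mul_zero])
  rw [← two_mul_prod_self_snd_lt_fst, ← ENNReal.mul_div_mul_right 1 2 hpos (measure_ne_top _ _),
    one_mul]

lemma prod_snd_lt_fst_inter_div_of_restrict_eq_smul {μ₁ μ₂ ν : Measure α} [SFinite μ₁]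
    [SFinite μ₂] [IsFiniteMeasure ν] [NeZero ν] [NullSingletonClass ν] {s : Set α}
    {c₁ c₂ : ℝ≥0∞} (h₁ : μ₁.restrict s = c₁ • ν) (h₂ : μ₂.restrict s = c₂ • ν)
    (hc₁ : c₁ ≠ 0) (hc₁' : c₁ ≠ ∞) (hc₂ : c₂ ≠ 0) (hc₂' : c₂ ≠ ∞) :
    μ₁.prod μ₂ ({p | p.2 < p.1} ∩ s ×ˢ s) / μ₁.prod μ₂ (s ×ˢ s) = 1 / 2 := by
  have hrestrict : (μ₁.prod μ₂).restrict (s ×ˢ s) = (c₁ * c₂) • ν.prod ν := by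
    rw [← Measure.prod_restrict, h₁, h₂, Measure.prod_smul_left, Measure.prod_smul_right,
      smul_smul]
  rw [← Measure.restrict_apply (measurableSet_lt measurable_snd measurable_fst),
    ← Measure.restrict_apply_univ (μ := μ₁.prod μ₂), hrestrict, Measure.smul_apply,
    Measure.smul_apply, smul_eq_mul, smul_eq_mul,
    ENNReal.mul_div_mul_left _ _ (mul_ne_zero hc₁ hc₂) (mul_ne_top hc₁' hc₂'),
    prod_self_snd_lt_fst_div_univ]

end Exchangeable

section Laplace

variable {σ a : ℝ}

lemma laplaceShiftDensity_eq_mul_of_le {x₀ t : ℝ} (ht : t ≤ a) (ha : a ≤ x₀) :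
    laplaceShiftDensity x₀ σ t =
      ENNReal.ofReal (Real.exp ((a - x₀) / σ)) * laplaceShiftDensity a σ t := by
  rw [laplaceShiftDensity, laplaceShiftDensity, ← ENNReal.ofReal_mul (Real.exp_pos _).le,
    abs_of_nonpos (by linarith), abs_of_nonpos (by linarith), mul_left_comm, ← Real.exp_add]
  congr 3
  ring

lemma restrict_Iio_withDensity_laplaceShiftDensity {x₀ : ℝ} (ha : a ≤ x₀) :
    (volume.withDensity (laplaceShiftDensity x₀ σ)).restrict (Iio a) =
      ENNReal.ofReal (Real.exp ((a - x₀) / σ)) •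
        (volume.withDensity (laplaceShiftDensity a σ)).restrict (Iio a) := by
  rw [restrict_withDensity measurableSet_Iio, restrict_withDensity measurableSet_Iio,
    ← withDensity_smul' _ _ ofReal_ne_top]
  refine withDensity_congr_ae ?_
  filter_upwards [ae_restrict_mem measurableSet_Iio] with t ht
  exact laplaceShiftDensity_eq_mul_of_le (le_of_lt ht) ha

lemma isFiniteMeasure_restrict_Iio_withDensity_laplaceShiftDensity (hσ : 0 < σ) :
    IsFiniteMeasure ((volume.withDensity (laplaceShiftDensity a σ)).restrict (Iio a)) := by
  rw [restrict_withDensity measurableSet_Iio]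
  refine isFiniteMeasure_withDensity_ofReal (Integrable.hasFiniteIntegral ?_)
  have hexp := IntegrableOn.mono_set ((integrableOn_exp_mul_Iic (inv_pos.2 hσ) a).const_mul
    (1 / (2 * σ) * Real.exp (-a / σ))) Iio_subset_Iic_self
  refine hexp.congr_fun (fun t ht => ?_) measurableSet_Iio
  beta_reduce
  rw [abs_of_neg (sub_neg.2 ht), mul_assoc, ← Real.exp_add]
  congr 2
  ring

lemma restrict_Iio_withDensity_laplaceShiftDensity_ne_zero (hσ : 0 < σ) :
    (volume.withDensity (laplaceShiftDensity a σ)).restrict (Iio a) ≠ 0 := by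
  have hmeas : Measurable (laplaceShiftDensity a σ) := by unfold laplaceShiftDensity; fun_prop
  rw [Ne, Measure.restrict_eq_zero, withDensity_apply_eq_zero' hmeas.aemeasurable]
  have hpos : {t | laplaceShiftDensity a σ t ≠ 0} = univ := by
    ext t
    simp [laplaceShiftDensity, hσ, Real.exp_pos]
  simp [hpos]

end Laplace

theorem stmt_17 (xi xj σ a : ℝ) (hσ : 0 < σ) (hij : xi > xj) (ha : a ≤ xj) :
    (((volume.withDensity (laplaceShiftDensity xi σ)).prod
        (volume.withDensity (laplaceShiftDensity xj σ)))
          {p : ℝ × ℝ | p.1 > p.2 ∧ p.1 < a ∧ p.2 < a}) /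
      (((volume.withDensity (laplaceShiftDensity xi σ)).prod
        (volume.withDensity (laplaceShiftDensity xj σ)))
          {p : ℝ × ℝ | p.1 < a ∧ p.2 < a}) = 1 / 2 := by
  have := isFiniteMeasure_restrict_Iio_withDensity_laplaceShiftDensity (a := a) hσ
  have : NeZero _ := ⟨restrict_Iio_withDensity_laplaceShiftDensity_ne_zero (a := a) hσ⟩
  -- The two sets are `{p | p.2 < p.1} ∩ Iio a ×ˢ Iio a` and `Iio a ×ˢ Iio a` up to unfolding.
  exact prod_snd_lt_fst_inter_div_of_restrict_eq_smul
    (restrict_Iio_withDensity_laplaceShiftDensity (ha.trans hij.le))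
    (restrict_Iio_withDensity_laplaceShiftDensity ha)
    (by positivity) ofReal_ne_top (by positivity) ofReal_ne_top
end
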